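/- arXiv:1805.06291 — 4 statements merged into one kernel-verified Lean document; each statement's English description precedes it below -/
import Mathlib

section
/- Let n be a natural number and let I be a subsemilattice of P(n) that is also an initial segment (downward closed subset) of P(n). Then for any nonempty u ∈ I, the semilattice [u, ∞)_I × {0,1} (the upper set of u in I, times the two-element chain, ordered lexicographically/componentwise) is isomorphic to an initial segment of P(n). -/
/-!
Fix a point `x ∈ u`. Sending `(w, b)` to `w \ u`, with `x` added exactly when `b` is true, is an
order embedding of `[u, ∞) × {0,1}` into `P(n)`: the set `w \ u` recovers `w ⊇ u`, and the point
`x` is free to encode the extra bit because it lies in `u`. Its image on `[u, ∞)_I × {0,1}` is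
downward closed when `I` is: a subset `t` of an image point is the image of
`((t \ {x}) ∪ u, x ∈ t)`, and `(t \ {x}) ∪ u` lies below the original `w ∈ I`.
-/

namespace Set

variable {α : Type*}

def markedDiff (u : Set α) (x : α) (w : Set α) (b : Bool) : Set α :=
  {y | y ∈ w ∧ y ∉ u ∨ b = true ∧ y = x}

variable {u w w' t : Set α} {x : α} {b b' : Bool}

@[simp]
theorem mem_markedDiff {y : α} :
    y ∈ markedDiff u x w b ↔ y ∈ w ∧ y ∉ u ∨ b = true ∧ y = x :=
  Iff.rfl

theorem markedDiff_subset_markedDiff_iff (hx : x ∈ u) (hw' : u ⊆ w') :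
    markedDiff u x w b ⊆ markedDiff u x w' b' ↔ w ⊆ w' ∧ b ≤ b' := by
  constructor
  · intro h
    refine ⟨fun y hy => ?_, Bool.le_iff_imp.2 fun hb => ?_⟩
    · by_cases hyu : y ∈ u
      · exact hw' hyu
      · rcases h (Or.inl ⟨hy, hyu⟩) with h' | ⟨-, rfl⟩
        · exact h'.1
        · exact absurd hx hyu
    · rcases h (Or.inr ⟨hb, rfl⟩) with h' | h'
      · exact absurd hx h'.2
      · exact h'.1
  · rintro ⟨hww', hbb'⟩ y (hy | ⟨hb, rfl⟩)
    · exact Or.inl ⟨hww' hy.1, hy.2⟩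
    · exact Or.inr ⟨Bool.le_iff_imp.1 hbb' hb, rfl⟩

theorem markedDiff_diff_singleton_union_eq [Decidable (x ∈ t)] (hx : x ∈ u)
    (ht : t ⊆ markedDiff u x w b) :
    markedDiff u x ((t \ {x}) ∪ u) (decide (x ∈ t)) = t := by
  ext y
  by_cases hyx : y = x
  · subst hyx
    simp [hx]
  · have hyu : y ∈ t → y ∉ u := fun hyt => by
      rcases ht hyt with h | ⟨-, rfl⟩
      exacts [h.2, absurd rfl hyx]
    simp only [mem_markedDiff, mem_union, mem_sdiff, mem_singleton_iff, hyx]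
    tauto

theorem diff_singleton_union_subset_of_subset_markedDiff (hw : u ⊆ w)
    (ht : t ⊆ markedDiff u x w b) :
    (t \ {x}) ∪ u ⊆ w := by
  refine union_subset (fun y ⟨hyt, hyx⟩ => ?_) hw
  rcases ht hyt with h | ⟨-, rfl⟩
  exacts [h.1, absurd rfl hyx]

end Set

theorem stmt_2_general (n : ℕ) (I : Set (Set (Fin n)))
    (hdown : ∀ s ∈ I, ∀ t, t ⊆ s → t ∈ I)
    (u : Set (Fin n)) (hne : u.Nonempty) :
    ∃ J : Set (Set (Fin n)), (∀ s ∈ J, ∀ t, t ⊆ s → t ∈ J) ∧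
      Nonempty (({w : Set (Fin n) // w ∈ I ∧ u ⊆ w} × Bool) ≃o {s : Set (Fin n) // s ∈ J}) := by
  classical
  obtain ⟨x, hx⟩ := hne
  let f : ({w : Set (Fin n) // w ∈ I ∧ u ⊆ w} × Bool) ↪o Set (Fin n) :=
    OrderEmbedding.ofMapLEIff (fun p => u.markedDiff x p.1.1 p.2) fun p q =>
      (Set.markedDiff_subset_markedDiff_iff hx q.1.2.2).trans Prod.mk_le_mk.symm
  refine ⟨Set.range f, ?_, ⟨f.orderIso⟩⟩
  rintro _ ⟨⟨⟨w, hwI, huw⟩, b⟩, rfl⟩ t ht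
  have hsub := Set.diff_singleton_union_subset_of_subset_markedDiff huw ht
  exact ⟨(⟨_, hdown w hwI _ hsub, Set.subset_union_right⟩, decide (x ∈ t)),
    Set.markedDiff_diff_singleton_union_eq hx ht⟩

/-- Let `I` be a subsemilattice of `P(n)` (closed under intersections) which is
also an initial segment (downward closed) of `P(n)`. Then for any nonempty
`u ∈ I`, the semilattice `[u, ∞)_I × {0,1}` (the upper set of `u` in `I` times
the two-element chain, with the componentwise/product order) is isomorphic to
an initial segment of `P(n)`. -/
theorem stmt_2 (n : ℕ) (I : Set (Set (Fin n)))
    (hdown : ∀ s ∈ I, ∀ t, t ⊆ s → t ∈ I)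
    (hmeet : ∀ s ∈ I, ∀ t ∈ I, s ∩ t ∈ I)
    (u : Set (Fin n)) (hu : u ∈ I) (hne : u.Nonempty) :
    ∃ J : Set (Set (Fin n)), (∀ s ∈ J, ∀ t, t ⊆ s → t ∈ J) ∧
      Nonempty (({w : Set (Fin n) // w ∈ I ∧ u ⊆ w} × Bool) ≃o {s : Set (Fin n) // s ∈ J}) :=
  stmt_2_general n I hdown u hne
end

section
/- For any abstract class K in vocabulary τ, there exists a unique smallest AEC K* in vocabulary τ such that K is a sub-abstract class of K* (i.e., |K| ⊆ |K*| and M ≤_K N implies M ≤_{K*} N); namely, K* is the intersection of all AECs containing K as a sub-abstract class. -/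
/-- A structure in a relational vocabulary `τ` (with arities `ar`) living inside
a fixed universe type `α`: a carrier set together with interpretations of the
relation symbols. -/
structure Str (τ : Type) (ar : τ → ℕ) (α : Type) where
  carrier : Set α
  rel : ∀ r : τ, Set (Fin (ar r) → α)
  rel_mem : ∀ r f, f ∈ rel r → ∀ i, f i ∈ carrier

instance {τ : Type} {ar : τ → ℕ} {α : Type} : Inhabited (Str τ ar α) :=
  ⟨⟨∅, fun _ => ∅, fun _ _ h _ => absurd h (Set.notMem_empty _)⟩⟩

variable {τ : Type} {ar : τ → ℕ} {α : Type}

/-- `M` is a substructure of `N`. -/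
def Substr (M N : Str τ ar α) : Prop :=
  M.carrier ⊆ N.carrier ∧ ∀ r, M.rel r = {f ∈ N.rel r | ∀ i, f i ∈ M.carrier}

/-- `f` induces an isomorphism of `M` onto `N`. -/
def IsoF (M N : Str τ ar α) (f : α → α) : Prop :=
  Set.InjOn f M.carrier ∧ f '' M.carrier = N.carrier ∧
    ∀ r (g : Fin (ar r) → α), (∀ i, g i ∈ M.carrier) →
      (g ∈ M.rel r ↔ (f ∘ g) ∈ N.rel r)

/-- The image structure of `M` under `f`. -/
def mapStr (f : α → α) (M : Str τ ar α) : Str τ ar α where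
  carrier := f '' M.carrier
  rel r := (fun g => f ∘ g) '' M.rel r
  rel_mem := by
    rintro r g ⟨g0, hg0, rfl⟩ i
    exact ⟨g0 i, M.rel_mem r g0 hg0 i, rfl⟩

/-- The union of a family of structures. -/
def unionStr (s : Set (Str τ ar α)) : Str τ ar α where
  carrier := ⋃ M ∈ s, M.carrier
  rel r := ⋃ M ∈ s, M.rel r
  rel_mem := by
    rintro r f hf i
    simp only [Set.mem_iUnion] at hf ⊢
    obtain ⟨M, hM, hfM⟩ := hf
    exact ⟨M, hM, M.rel_mem r f hfM i⟩

/-- An abstract class: a class of `τ`-structures closed under isomorphism together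
with a partial order `le` extending substructure. -/
structure AC (τ : Type) (ar : τ → ℕ) (α : Type) where
  K : Set (Str τ ar α)
  le : Str τ ar α → Str τ ar α → Prop
  le_mem : ∀ {M N}, le M N → M ∈ K ∧ N ∈ K
  le_refl : ∀ M ∈ K, le M M
  le_trans : ∀ {M N P}, le M N → le N P → le M P
  le_antisymm : ∀ {M N}, le M N → le N M → M = N
  le_sub : ∀ {M N}, le M N → Substr M N
  iso_closed : ∀ {M N f}, M ∈ K → IsoF M N f → N ∈ K

/-- A `K`-embedding of `M` into `N` (an isomorphism of `M` onto a `≤`-substructure of `N`). -/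
def KEmb (A : AC τ ar α) (M N : Str τ ar α) (f : α → α) : Prop :=
  Set.InjOn f M.carrier ∧ A.le (mapStr f M) N ∧
    ∀ r (g : Fin (ar r) → α), (∀ i, g i ∈ M.carrier) →
      (g ∈ M.rel r ↔ (f ∘ g) ∈ (mapStr f M).rel r)

/-- `N` embeds into `M` over `M₀`. -/
def EmbedsOver (A : AC τ ar α) (M0 N M : Str τ ar α) : Prop :=
  ∃ f, KEmb A N M f ∧ ∀ x ∈ M0.carrier, x ∈ N.carrier → f x = x

/-- `M` and `N` are isomorphic over `M₀`. -/
def IsIsoOver (M0 M N : Str τ ar α) : Prop :=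
  ∃ f, IsoF M N f ∧ ∀ x ∈ M0.carrier, x ∈ M.carrier → f x = x

/-- An abstract elementary class. -/
structure AEC (τ : Type) (ar : τ → ℕ) (α : Type) extends AC τ ar α where
  coherence : ∀ {M0 M1 M2}, le M0 M2 → le M1 M2 → M0.carrier ⊆ M1.carrier → le M0 M1
  LS : Cardinal
  LS_ge : Cardinal.mk τ + Cardinal.aleph0 ≤ LS
  LS_spec : ∀ M ∈ K, ∀ s : Set α, s ⊆ M.carrier →
    ∃ M0, le M0 M ∧ s ⊆ M0.carrier ∧ Cardinal.mk M0.carrier ≤ Cardinal.mk s + LS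
  chain : ∀ s : Set (Str τ ar α), s.Nonempty → (∀ M ∈ s, M ∈ K) → IsChain le s →
    unionStr s ∈ K ∧ ∀ M ∈ s, le M (unionStr s)
  smooth : ∀ s : Set (Str τ ar α), s.Nonempty → (∀ M ∈ s, M ∈ K) → IsChain le s →
    ∀ N ∈ K, (∀ M ∈ s, le M N) → le (unionStr s) N

/-- `A` is a sub-abstract class of `B`. -/
def SubAC {τ : Type} {ar : τ → ℕ} {α : Type} (A B : AC τ ar α) : Prop :=
  A.K ⊆ B.K ∧ ∀ M N, A.le M N → B.le M N

theorem Str.ext' {M N : Str τ ar α} (hc : M.carrier = N.carrier)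
    (hr : M.rel = N.rel) : M = N := by
  cases M; cases N; cases hc; cases hr; rfl

theorem Substr.refl' (M : Str τ ar α) : Substr M M := by
  refine ⟨subset_rfl, fun r => ?_⟩
  ext f
  exact ⟨fun hf => ⟨hf, M.rel_mem r f hf⟩, fun hf => hf.1⟩

theorem Substr.trans' {M N P : Str τ ar α} (h1 : Substr M N) (h2 : Substr N P) :
    Substr M P := by
  refine ⟨h1.1.trans h2.1, fun r => ?_⟩
  rw [h1.2 r, h2.2 r]
  ext f
  constructor
  · rintro ⟨⟨hfP, _⟩, hfM⟩; exact ⟨hfP, hfM⟩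
  · rintro ⟨hfP, hfM⟩; exact ⟨⟨hfP, fun i => h1.1 (hfM i)⟩, hfM⟩

theorem Substr.antisymm' {M N : Str τ ar α} (h1 : Substr M N) (h2 : Substr N M) :
    M = N := by
  have hc : M.carrier = N.carrier := Set.Subset.antisymm h1.1 h2.1
  refine Str.ext' hc (funext fun r => ?_)
  rw [h1.2 r, h2.2 r, hc]
  ext f
  constructor
  · rintro ⟨⟨hf, _⟩, h⟩; exact ⟨hf, h⟩
  · rintro ⟨hf, h⟩; exact ⟨⟨hf, h⟩, h⟩

theorem Substr.coherence' {M0 M1 M2 : Str τ ar α} (h0 : Substr M0 M2)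
    (h1 : Substr M1 M2) (hc : M0.carrier ⊆ M1.carrier) : Substr M0 M1 := by
  refine ⟨hc, fun r => ?_⟩
  rw [h0.2 r, h1.2 r]
  ext f
  constructor
  · rintro ⟨hf2, hf0⟩; exact ⟨⟨hf2, fun i => hc (hf0 i)⟩, hf0⟩
  · rintro ⟨⟨hf2, _⟩, hf0⟩; exact ⟨hf2, hf0⟩

/-- In a nonempty `Substr`-chain, any finitely many members have a common upper bound
in the chain. -/
theorem chain_finite_ub {s : Set (Str τ ar α)} (hne : s.Nonempty)
    (hch : IsChain Substr s) :
    ∀ (n : ℕ) (g : Fin n → Str τ ar α), (∀ i, g i ∈ s) →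
      ∃ M ∈ s, ∀ i, Substr (g i) M := by
  intro n
  induction n with
  | zero =>
    intro g _
    obtain ⟨M, hM⟩ := hne
    exact ⟨M, hM, fun i => i.elim0⟩
  | succ n ih =>
    intro g hg
    obtain ⟨M, hMs, hM⟩ := ih (fun i => g i.castSucc) (fun i => hg _)
    by_cases heq : M = g (Fin.last n)
    · refine ⟨M, hMs, fun i => ?_⟩
      induction i using Fin.lastCases with
      | last => rw [← heq]; exact Substr.refl' M
      | cast j => exact hM j
    · rcases hch hMs (hg (Fin.last n)) heq with h | h
      · refine ⟨g (Fin.last n), hg _, fun i => ?_⟩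
        induction i using Fin.lastCases with
        | last => exact Substr.refl' _
        | cast j => exact (hM j).trans' h
      · refine ⟨M, hMs, fun i => ?_⟩
        induction i using Fin.lastCases with
        | last => exact h
        | cast j => exact hM j

/-- The class of all `τ`-structures, ordered by substructure, is an AEC. -/
def fullAEC (τ : Type) (ar : τ → ℕ) (α : Type) : AEC τ ar α where
  K := Set.univ
  le := Substr
  le_mem _ := ⟨trivial, trivial⟩
  le_refl M _ := Substr.refl' M
  le_trans h1 h2 := h1.trans' h2
  le_antisymm h1 h2 := h1.antisymm' h2
  le_sub h := h
  iso_closed _ _ := trivial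
  coherence h0 h1 hc := h0.coherence' h1 hc
  LS := Cardinal.mk α + (Cardinal.mk τ + Cardinal.aleph0)
  LS_ge := le_add_self
  LS_spec := by
    intro M _ s _
    refine ⟨M, Substr.refl' M, by assumption, ?_⟩
    calc Cardinal.mk M.carrier ≤ Cardinal.mk α := Cardinal.mk_set_le _
      _ ≤ Cardinal.mk α + (Cardinal.mk τ + Cardinal.aleph0) := le_self_add
      _ ≤ Cardinal.mk s + (Cardinal.mk α + (Cardinal.mk τ + Cardinal.aleph0)) :=
          le_add_self
  chain := by
    intro s hne _ hch
    refine ⟨trivial, fun M hM => ⟨?_, fun r => ?_⟩⟩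
    · exact Set.subset_biUnion_of_mem hM
    · ext f
      constructor
      · intro hf
        refine ⟨?_, M.rel_mem r f hf⟩
        simp only [unionStr, Set.mem_iUnion]
        exact ⟨M, hM, hf⟩
      · rintro ⟨hf, hfc⟩
        simp only [unionStr, Set.mem_iUnion] at hf
        obtain ⟨N, hN, hfN⟩ := hf
        by_cases heq : M = N
        · exact heq ▸ hfN
        · rcases hch hM hN heq with h | h
          · rw [h.2 r]; exact ⟨hfN, hfc⟩
          · have := h.2 r
            rw [this] at hfN
            exact hfN.1
  smooth := by
    intro s hne _ hch N _ hub
    refine ⟨?_, fun r => ?_⟩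
    · intro x hx
      simp only [unionStr, Set.mem_iUnion] at hx
      obtain ⟨M, hM, hxM⟩ := hx
      exact (hub M hM).1 hxM
    · ext f
      constructor
      · intro hf
        simp only [unionStr, Set.mem_iUnion] at hf ⊢
        obtain ⟨M, hM, hfM⟩ := hf
        have h := (hub M hM).2 r
        rw [h] at hfM
        exact ⟨hfM.1, fun i => ⟨M, hM, hfM.2 i⟩⟩
      · rintro ⟨hfN, hfc⟩
        simp only [unionStr, Set.mem_iUnion] at hfc ⊢
        choose g hg hgc using hfc
        obtain ⟨M, hMs, hM⟩ := chain_finite_ub hne hch _ g hg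
        refine ⟨M, hMs, ?_⟩
        rw [(hub M hMs).2 r]
        exact ⟨hfN, fun i => (hM i).1 (hgc i)⟩

theorem subAC_full (A : AC τ ar α) : SubAC A (fullAEC τ ar α).toAC :=
  ⟨fun _ _ => trivial, fun _ _ h => A.le_sub h⟩

/-- The intersection of all AECs containing `A`. -/
def minAEC (A : AC τ ar α) : AEC τ ar α where
  K := {M | ∀ B' : AEC τ ar α, SubAC A B'.toAC → M ∈ B'.K}
  le M N := ∀ B' : AEC τ ar α, SubAC A B'.toAC → B'.le M N
  le_mem h :=
    ⟨fun B' hB' => (B'.le_mem (h B' hB')).1, fun B' hB' => (B'.le_mem (h B' hB')).2⟩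
  le_refl M hM B' hB' := B'.le_refl M (hM B' hB')
  le_trans h1 h2 B' hB' := B'.le_trans (h1 B' hB') (h2 B' hB')
  le_antisymm h1 h2 :=
    (fullAEC τ ar α).le_antisymm (h1 _ (subAC_full A)) (h2 _ (subAC_full A))
  le_sub h := (fullAEC τ ar α).le_sub (h _ (subAC_full A))
  iso_closed hM hiso B' hB' := B'.iso_closed (hM B' hB') hiso
  coherence h0 h1 hc B' hB' := B'.coherence (h0 B' hB') (h1 B' hB') hc
  LS := Cardinal.mk α + (Cardinal.mk τ + Cardinal.aleph0)
  LS_ge := le_add_self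
  LS_spec := by
    intro M hM s _
    refine ⟨M, fun B' hB' => B'.le_refl M (hM B' hB'), by assumption, ?_⟩
    calc Cardinal.mk M.carrier ≤ Cardinal.mk α := Cardinal.mk_set_le _
      _ ≤ Cardinal.mk α + (Cardinal.mk τ + Cardinal.aleph0) := le_self_add
      _ ≤ Cardinal.mk s + (Cardinal.mk α + (Cardinal.mk τ + Cardinal.aleph0)) :=
          le_add_self
  chain := by
    intro s hne hmem hch
    constructor
    · intro B' hB'
      exact (B'.chain s hne (fun M hM => hmem M hM B' hB')
        (hch.mono_rel fun M N h => h B' hB')).1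
    · intro M hM B' hB'
      exact (B'.chain s hne (fun M hM => hmem M hM B' hB')
        (hch.mono_rel fun M N h => h B' hB')).2 M hM
  smooth := by
    intro s hne hmem hch N hN hub B' hB'
    exact B'.smooth s hne (fun M hM => hmem M hM B' hB')
      (hch.mono_rel fun M N h => h B' hB') N (hN B' hB') (fun M hM => hub M hM B' hB')

/-- Every abstract class `A` is contained in a unique smallest AEC: there is an
AEC `B` containing `A` as a sub-abstract class, below every AEC containing `A`
as a sub-abstract class, and any other such least AEC has the same models and
ordering. -/
theorem stmt_8 {τ : Type} {ar : τ → ℕ} {α : Type} (A : AC τ ar α) :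
    ∃ B : AEC τ ar α, SubAC A B.toAC ∧
      (∀ B' : AEC τ ar α, SubAC A B'.toAC → SubAC B.toAC B'.toAC) ∧
      ∀ B' : AEC τ ar α,
        (SubAC A B'.toAC ∧ ∀ B'' : AEC τ ar α, SubAC A B''.toAC → SubAC B'.toAC B''.toAC) →
        B'.K = B.K ∧ B'.le = B.le := by
  have hsubA : SubAC A (minAEC A).toAC :=
    ⟨fun M hM B' hB' => hB'.1 hM, fun M N h B' hB' => hB'.2 M N h⟩
  have hmin : ∀ B' : AEC τ ar α, SubAC A B'.toAC → SubAC (minAEC A).toAC B'.toAC :=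
    fun B' hB' => ⟨fun M hM => hM B' hB', fun M N h => h B' hB'⟩
  refine ⟨minAEC A, hsubA, hmin, ?_⟩
  rintro B' ⟨h1, h2⟩
  have hsub := h2 (minAEC A) hsubA
  have hsup := hmin B' h1
  exact ⟨Set.Subset.antisymm hsub.1 hsup.1,
    funext fun M => funext fun N => propext ⟨hsub.2 M N, hsup.2 M N⟩⟩
end

section
/- Let is be a multidimensional independence relation whose class of index semilattices Iis is closed under products. If m₀ ≤ m₁ ≤ m₂ are I-systems with I ∈ Iis, the concatenated system m₀ * m₁ is independent, and m₁ * m₂ is independent, then m₀ * m₁ * m₂ is independent; in particular m₀ * m₂ is independent, so the transitivity axiom follows from the monotonicity axioms. -/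
variable {τ : Type} {ar : τ → ℕ} {α : Type}

variable {τ : Type} {ar : τ → ℕ} {α : Type}

/-- Index semilattices are (finite) sets of finite subsets of `ℕ`, i.e.
sub-semilattices of `P(ω)`, ordered by inclusion with meet given by
intersection (every finite semilattice is isomorphic to such). -/
abbrev Idx : Type := Finset (Finset ℕ)

/-- `I` is closed under meets (intersections), i.e. is a semilattice. -/
def MeetClosed (I : Idx) : Prop := ∀ u ∈ I, ∀ v ∈ I, u ∩ v ∈ I

/-- `J` is an initial segment (downward closed subset) of `I`. -/
def InitSeg (J I : Idx) : Prop := J ⊆ I ∧ ∀ u ∈ J, ∀ v ∈ I, v ⊆ u → v ∈ J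

/-- `m` is an `(I, K)`-system: a `≤`-monotone family of models of `A`. -/
def IsSystem (A : AC τ ar α) (I : Idx) (m : Finset ℕ → Str τ ar α) : Prop :=
  (∀ u ∈ I, m u ∈ A.K) ∧ ∀ u ∈ I, ∀ v ∈ I, u ⊆ v → A.le (m u) (m v)

/-- A system embedding `g : m → m'` over index set `I`: a compatible family of
`K`-embeddings. -/
def SysEmb (A : AC τ ar α) (I : Idx) (m m' : Finset ℕ → Str τ ar α)
    (g : Finset ℕ → α → α) : Prop :=
  (∀ u ∈ I, KEmb A (m u) (m' u) (g u)) ∧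
    ∀ u ∈ I, ∀ v ∈ I, u ⊆ v → ∀ x ∈ (m u).carrier, g u x = g v x

/-- A system isomorphism `g : m ≅ m'` over index set `I`. -/
def SysIso (I : Idx) (m m' : Finset ℕ → Str τ ar α)
    (g : Finset ℕ → α → α) : Prop :=
  (∀ u ∈ I, IsoF (m u) (m' u) (g u)) ∧
    ∀ u ∈ I, ∀ v ∈ I, u ⊆ v → ∀ x ∈ (m u).carrier, g u x = g v x

/-- The system `m * m'` indexed (up to isomorphism `φ`) by `I × 2`. -/
def star2fun (I J : Idx) (φ : {x : Finset ℕ // x ∈ J} ≃o ({x : Finset ℕ // x ∈ I} × Bool))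
    (m m' : Finset ℕ → Str τ ar α) : Finset ℕ → Str τ ar α :=
  fun v => if h : v ∈ J then
    (if (φ ⟨v, h⟩).2 then m' else m) ((φ ⟨v, h⟩).1 : Finset ℕ)
  else default

/-- `m * m'` (the `(I × 2)`-indexed concatenated system) is independent. -/
def StarNF (NF : Idx → (Finset ℕ → Str τ ar α) → Prop) (I : Idx)
    (m m' : Finset ℕ → Str τ ar α) : Prop :=
  ∃ (J : Idx) (φ : {x : Finset ℕ // x ∈ J} ≃o ({x : Finset ℕ // x ∈ I} × Bool)),
    NF J (star2fun I J φ m m')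

/-- A multidimensional independence relation: an abstract class `A`, a closed
class `Iis` of finite semilattices, and a class `NF` of independent systems,
satisfying invariance, nontriviality, disjointness, symmetry, transitivity and
monotonicity 1–5. -/
structure MultiIndep (τ : Type) (ar : τ → ℕ) (α : Type) where
  A : AC τ ar α
  Iis : Set Idx
  NF : Idx → (Finset ℕ → Str τ ar α) → Prop
  -- `Iis` is a closed class of finite semilattices:
  iis_inf : ∀ I ∈ Iis, MeetClosed I
  iis_iso : ∀ I ∈ Iis, ∀ J : Idx, MeetClosed J →
    Nonempty ({x : Finset ℕ // x ∈ J} ≃o {x : Finset ℕ // x ∈ I}) → J ∈ Iis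
  iis_init : ∀ I ∈ Iis, ∀ J : Idx, InitSeg J I → J ∈ Iis
  iis_prod : ∀ I ∈ Iis, ∀ u ∈ I, (∃ w ∈ I, ¬ u ⊆ w) →
    ∃ J ∈ Iis, Nonempty ({x : Finset ℕ // x ∈ J} ≃o
      ({x : Finset ℕ // x ∈ I ∧ u ⊆ x} × Bool))
  -- independent systems are systems with index in `Iis`:
  nf_sys : ∀ I m, NF I m → I ∈ Iis ∧ IsSystem A I m
  -- `NF I m` only depends on the values of `m` on `I`:
  nf_restrict : ∀ I m m', (∀ u ∈ I, m u = m' u) → NF I m → NF I m'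
  -- invariance:
  invariance : ∀ I m m' g, NF I m → IsSystem A I m' → SysIso I m m' g → NF I m'
  -- nontriviality:
  nf_nonempty : ∃ I m, NF I m
  nontriv : ∀ I ∈ Iis, ∀ M ∈ A.K, I.Nonempty → ∃ m, NF I m ∧ ∃ u ∈ I, m u = M
  -- disjointness:
  disj : ∀ I m, NF I m → ∀ u ∈ I, ∀ v ∈ I, ∀ w ∈ I, ∀ t ∈ I,
    u ⊆ v → v ⊆ t → u ⊆ w → w ⊆ t →
    (m v).carrier ∩ (m w).carrier ⊆ (m u).carrier
  -- symmetry (invariance under isomorphisms of index semilattices):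
  symm : ∀ I J : Idx, ∀ φ : {x : Finset ℕ // x ∈ I} ≃o {x : Finset ℕ // x ∈ J},
    ∀ m, NF I m →
    NF J (fun v => if h : v ∈ J then m ((φ.symm ⟨v, h⟩ : {x : Finset ℕ // x ∈ I}) : Finset ℕ)
      else default)
  -- transitivity:
  trans : ∀ I : Idx, ∀ m0 m1 m2 : Finset ℕ → Str τ ar α,
    (∀ u ∈ I, A.le (m0 u) (m1 u)) → (∀ u ∈ I, A.le (m1 u) (m2 u)) →
    StarNF NF I m0 m1 → StarNF NF I m1 m2 → StarNF NF I m0 m2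
  -- monotonicity 1:
  mono1 : ∀ I m, NF I m → ∀ J ∈ Iis, J ⊆ I → NF J m
  -- monotonicity 2:
  mono2 : ∀ I m, IsSystem A I m → ∀ v ∈ I, (∀ w ∈ I, v ⊆ w → w = v) →
    ∀ N, A.le (m v) N → (NF I m ↔ NF I (Function.update m v N))
  -- monotonicity 3:
  mono3 : ∀ I ∈ Iis, ∀ m, IsSystem A I m →
    (NF I m ↔ ∀ v ∈ I, (∀ w ∈ I, v ⊆ w → w = v) →
      NF (I.filter (fun u => u ⊆ v)) m)
  -- monotonicity 4:
  mono4 : ∀ I ∈ Iis, ∀ I1 ∈ Iis, ∀ I2 ∈ Iis, ∀ m, IsSystem A I m →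
    InitSeg I1 I → I2 ⊆ I →
    (∀ u ∈ I1, ∃ w, w ∈ I1 ∧ w ∈ I2 ∧ u ⊆ w) →
    I1 ∪ I2 = I → NF I1 m → NF I2 m → NF I m
  -- monotonicity 5:
  mono5 : ∀ I ∈ Iis, ∀ u ∈ I, (∃ w ∈ I, ¬ u ⊆ w) →
    ∀ m m', NF (I.filter (fun v => u ⊆ v)) m →
    (∀ v ∈ I.filter (fun v => u ⊆ v), A.le (m v) (m' v)) →
    StarNF NF (I.filter (fun v => u ⊆ v)) m m' →
    (∀ v ∈ I, ¬ u ⊆ v → m v = m' v) →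
    (NF I m ↔ NF I m')

/-- The system `m0 * m1 * m2` indexed (up to isomorphism `φ`) by `I × 3`. -/
def star3fun (I J : Idx) (φ : {x : Finset ℕ // x ∈ J} ≃o ({x : Finset ℕ // x ∈ I} × Fin 3))
    (m0 m1 m2 : Finset ℕ → Str τ ar α) : Finset ℕ → Str τ ar α :=
  fun v => if h : v ∈ J then
    (![m0, m1, m2] (φ ⟨v, h⟩).2) ((φ ⟨v, h⟩).1 : Finset ℕ)
  else default


/-! ### Auxiliary machinery for the proof -/

section JpairSection
variable (I J : Idx) (φ : {x : Finset ℕ // x ∈ J} ≃o ({x : Finset ℕ // x ∈ I} × Fin 3))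

/-- The part of `J` corresponding to `I × {b0, b1}`. -/
def Jpair (b0 b1 : Fin 3) : Idx :=
  (J.attach.filter (fun v => (φ v).2 = b0 ∨ (φ v).2 = b1)).image Subtype.val

variable {I J φ}

lemma Jpair_subset {b0 b1 : Fin 3} : Jpair I J φ b0 b1 ⊆ J := by
  intro v hv
  simp only [Jpair, Finset.mem_image, Finset.mem_filter, Finset.mem_attach, true_and] at hv
  obtain ⟨a, _, rfl⟩ := hv
  exact a.prop

lemma Jpair_spec {b0 b1 : Fin 3} {v : Finset ℕ} (hv : v ∈ Jpair I J φ b0 b1) (h : v ∈ J) :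
    (φ ⟨v, h⟩).2 = b0 ∨ (φ ⟨v, h⟩).2 = b1 := by
  simp only [Jpair, Finset.mem_image, Finset.mem_filter, Finset.mem_attach, true_and] at hv
  obtain ⟨a, ha, rfl⟩ := hv
  exact ha

lemma mem_Jpair_of {b0 b1 : Fin 3} {v : Finset ℕ} (h : v ∈ J)
    (hor : (φ ⟨v, h⟩).2 = b0 ∨ (φ ⟨v, h⟩).2 = b1) : v ∈ Jpair I J φ b0 b1 := by
  simp only [Jpair, Finset.mem_image, Finset.mem_filter, Finset.mem_attach, true_and]
  exact ⟨⟨v, h⟩, hor, rfl⟩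

lemma pair_le_iff {b0 b1 : Fin 3} (hb : b0 < b1) {s t : Fin 3}
    (hs : s = b0 ∨ s = b1) (ht : t = b0 ∨ t = b1) :
    (decide (s = b1) ≤ decide (t = b1)) ↔ s ≤ t := by
  rcases hs with rfl | rfl <;> rcases ht with rfl | rfl <;>
    simp [hb.le, hb.ne, hb.not_ge, le_refl]

/-- The canonical order isomorphism `Jpair ≃o I × Bool`. -/
def ePair (b0 b1 : Fin 3) (hb : b0 < b1) :
    {x : Finset ℕ // x ∈ Jpair I J φ b0 b1} ≃o ({x : Finset ℕ // x ∈ I} × Bool) where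
  toFun x := ((φ ⟨x.1, Jpair_subset x.2⟩).1, decide ((φ ⟨x.1, Jpair_subset x.2⟩).2 = b1))
  invFun p := ⟨(φ.symm (p.1, if p.2 then b1 else b0)).1,
    mem_Jpair_of (φ.symm (p.1, if p.2 then b1 else b0)).2 (by
      show (φ (φ.symm (p.1, if p.2 then b1 else b0))).2 = b0 ∨
        (φ (φ.symm (p.1, if p.2 then b1 else b0))).2 = b1
      rw [OrderIso.apply_symm_apply]
      cases p.2 <;> simp)⟩
  left_inv := fun x => by
    apply Subtype.ext
    have h := Jpair_spec x.2 (Jpair_subset x.2)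
    have key : ((φ ⟨x.1, Jpair_subset x.2⟩).1,
        if decide ((φ ⟨x.1, Jpair_subset x.2⟩).2 = b1) then b1 else b0)
        = φ ⟨x.1, Jpair_subset x.2⟩ := by
      rcases h with h | h <;> simp [Prod.ext_iff, h, hb.ne]
    show (φ.symm _).1 = x.1
    rw [key, OrderIso.symm_apply_apply]
  right_inv := fun p => by
    have hq : ∀ h, φ ⟨(φ.symm (p.1, if p.2 then b1 else b0)).1, h⟩
        = (p.1, if p.2 then b1 else b0) := fun h => φ.apply_symm_apply _
    show ((φ ⟨_, _⟩).1, decide ((φ ⟨_, _⟩).2 = b1)) = p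
    rw [hq]
    cases hp : p.2 <;> simp [hb.ne, Prod.ext_iff, hp]
  map_rel_iff' := by
    intro x y
    show ((φ ⟨x.1, Jpair_subset x.2⟩).1, decide ((φ ⟨x.1, Jpair_subset x.2⟩).2 = b1)) ≤
      ((φ ⟨y.1, Jpair_subset y.2⟩).1, decide ((φ ⟨y.1, Jpair_subset y.2⟩).2 = b1)) ↔ x ≤ y
    rw [Prod.mk_le_mk, pair_le_iff hb (Jpair_spec x.2 _) (Jpair_spec y.2 _), ← Prod.le_def,
      φ.le_iff_le]
    exact ⟨fun h => h, fun h => h⟩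

lemma ePair_apply {b0 b1 : Fin 3} (hb : b0 < b1) {v : Finset ℕ} (hv : v ∈ Jpair I J φ b0 b1) :
    ePair b0 b1 hb ⟨v, hv⟩
      = ((φ ⟨v, Jpair_subset hv⟩).1, decide ((φ ⟨v, Jpair_subset hv⟩).2 = b1)) := rfl

lemma meetClosed_Jpair {b0 b1 : Fin 3} (hb : b0 < b1) (hJm : MeetClosed J) :
    MeetClosed (Jpair I J φ b0 b1) := by
  intro u hu v hv
  have huJ : u ∈ J := Jpair_subset hu
  have hvJ : v ∈ J := Jpair_subset hv
  have hw : u ∩ v ∈ J := hJm u huJ v hvJ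
  have hmu : (⟨u ∩ v, hw⟩ : {x : Finset ℕ // x ∈ J}) ≤ ⟨u, huJ⟩ :=
    Subtype.mk_le_mk.mpr (Finset.le_iff_subset.mpr Finset.inter_subset_left)
  have hmv : (⟨u ∩ v, hw⟩ : {x : Finset ℕ // x ∈ J}) ≤ ⟨v, hvJ⟩ :=
    Subtype.mk_le_mk.mpr (Finset.le_iff_subset.mpr Finset.inter_subset_right)
  have h1 := φ.monotone hmu
  have h2 := φ.monotone hmv
  set d : Fin 3 := min (φ ⟨u, huJ⟩).2 (φ ⟨v, hvJ⟩).2 with hd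
  have hcd : (φ ⟨u ∩ v, hw⟩).2 ≤ d := le_min h1.2 h2.2
  set t := φ.symm ((φ ⟨u ∩ v, hw⟩).1, d) with ht
  have htu : t ≤ ⟨u, huJ⟩ := by
    rw [← φ.le_iff_le, ht, OrderIso.apply_symm_apply]
    exact Prod.mk_le_mk.mpr ⟨h1.1, min_le_left _ _⟩
  have htv : t ≤ ⟨v, hvJ⟩ := by
    rw [← φ.le_iff_le, ht, OrderIso.apply_symm_apply]
    exact Prod.mk_le_mk.mpr ⟨h2.1, min_le_right _ _⟩
  have htw : t ≤ ⟨u ∩ v, hw⟩ := by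
    apply Subtype.coe_le_coe.mp
    exact Finset.le_iff_subset.mpr (Finset.subset_inter
      (Finset.le_iff_subset.mp (Subtype.coe_le_coe.mpr htu))
      (Finset.le_iff_subset.mp (Subtype.coe_le_coe.mpr htv)))
  have hdc : d ≤ (φ ⟨u ∩ v, hw⟩).2 := by
    have := φ.monotone htw
    rw [ht, OrderIso.apply_symm_apply] at this
    exact this.2
  have hcde : (φ ⟨u ∩ v, hw⟩).2 = d := le_antisymm hcd hdc
  apply mem_Jpair_of hw
  rw [hcde, hd]
  rcases Jpair_spec hu huJ with h | h <;> rcases Jpair_spec hv hvJ with h' | h' <;>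
    rw [h, h'] <;> simp [min_def, hb.le, hb.not_ge, le_refl]

lemma initSeg_Jpair01 : InitSeg (Jpair I J φ 0 1) J := by
  refine ⟨Jpair_subset, fun u hu v hv hvu => ?_⟩
  have huJ : u ∈ J := Jpair_subset hu
  apply mem_Jpair_of hv
  have hle : (φ ⟨v, hv⟩).2 ≤ (φ ⟨u, huJ⟩).2 :=
    (φ.monotone (Subtype.mk_le_mk.mpr (Finset.le_iff_subset.mpr hvu))).2
  have h1 : (φ ⟨u, huJ⟩).2 ≤ 1 := by
    rcases Jpair_spec hu huJ with h | h <;> rw [h] <;> decide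
  have : (φ ⟨v, hv⟩).2 ≤ 1 := le_trans hle h1
  revert this
  generalize (φ ⟨v, hv⟩).2 = i
  intro hi
  fin_cases i <;> simp_all

end JpairSection

section StarHelpers
variable {τ : Type} {ar : τ → ℕ} {α : Type}
variable {I J : Idx} {φ : {x : Finset ℕ // x ∈ J} ≃o ({x : Finset ℕ // x ∈ I} × Fin 3)}

lemma star2_eq_star3 {b0 b1 : Fin 3} (hb : b0 < b1) (m0 m1 m2 : Finset ℕ → Str τ ar α)
    {v : Finset ℕ} (hv : v ∈ Jpair I J φ b0 b1) :
    star2fun I (Jpair I J φ b0 b1) (ePair b0 b1 hb) (![m0, m1, m2] b0) (![m0, m1, m2] b1) v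
      = star3fun I J φ m0 m1 m2 v := by
  have hvJ : v ∈ J := Jpair_subset hv
  rw [star2fun, star3fun, dif_pos hv, dif_pos hvJ, ePair_apply hb hv]
  rcases Jpair_spec hv hvJ with h | h <;> rw [h] <;> simp [hb.ne]

lemma NF_Jpair (S : MultiIndep τ ar α) {b0 b1 : Fin 3} (hb : b0 < b1)
    (m0 m1 m2 : Finset ℕ → Str τ ar α)
    (hs : StarNF S.NF I (![m0, m1, m2] b0) (![m0, m1, m2] b1)) :
    S.NF (Jpair I J φ b0 b1) (star3fun I J φ m0 m1 m2) := by
  obtain ⟨J', φ', hNF⟩ := hs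
  have h2 := S.symm J' (Jpair I J φ b0 b1) (φ'.trans (ePair b0 b1 hb).symm) _ hNF
  refine S.nf_restrict _ _ _ (fun v hv => ?_) h2
  rw [dif_pos hv]
  have hcast : ((φ'.trans (ePair b0 b1 hb).symm).symm ⟨v, hv⟩ : {x : Finset ℕ // x ∈ J'})
      = φ'.symm (ePair b0 b1 hb ⟨v, hv⟩) := rfl
  rw [hcast]
  have hm : (φ'.symm (ePair (I := I) (J := J) (φ := φ) b0 b1 hb ⟨v, hv⟩) :
      Finset ℕ) ∈ J' := (φ'.symm _).prop
  rw [star2fun, dif_pos hm]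
  have hφ' : φ' ⟨(φ'.symm (ePair b0 b1 hb ⟨v, hv⟩) : Finset ℕ), hm⟩
      = ePair b0 b1 hb ⟨v, hv⟩ := φ'.apply_symm_apply _
  rw [hφ', ← star2_eq_star3 hb m0 m1 m2 hv, star2fun, dif_pos hv]

lemma star_mono (S : MultiIndep τ ar α) {ma mb : Finset ℕ → Str τ ar α}
    (hs : StarNF S.NF I ma mb) :
    ∀ u ∈ I, ∀ v ∈ I, u ⊆ v → S.A.le (ma u) (ma v) ∧ S.A.le (mb u) (mb v) := by
  obtain ⟨J', φ', hNF⟩ := hs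
  have hSys := (S.nf_sys _ _ hNF).2.2
  have key : ∀ (b : Bool) (u : Finset ℕ) (hu : u ∈ I),
      star2fun I J' φ' ma mb (φ'.symm (⟨u, hu⟩, b) : Finset ℕ)
        = (if b then mb else ma) u := by
    intro b u hu
    have hm : (φ'.symm (⟨u, hu⟩, b) : Finset ℕ) ∈ J' := (φ'.symm _).prop
    rw [star2fun, dif_pos hm]
    have : φ' ⟨(φ'.symm (⟨u, hu⟩, b) : Finset ℕ), hm⟩ = (⟨u, hu⟩, b) :=
      φ'.apply_symm_apply _
    rw [this]
  intro u hu v hv huv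
  have hab : ∀ b : Bool, (φ'.symm (⟨u, hu⟩, b) : {x : Finset ℕ // x ∈ J'})
      ≤ φ'.symm (⟨v, hv⟩, b) := fun b =>
    φ'.symm.monotone (Prod.mk_le_mk.mpr
      ⟨Subtype.mk_le_mk.mpr (Finset.le_iff_subset.mpr huv), le_refl b⟩)
  have hstep : ∀ b : Bool, S.A.le ((if b then mb else ma) u) ((if b then mb else ma) v) := by
    intro b
    have := hSys _ (φ'.symm (⟨u, hu⟩, b)).prop _ (φ'.symm (⟨v, hv⟩, b)).prop
      (Finset.le_iff_subset.mp (Subtype.coe_le_coe.mpr (hab b)))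
    rwa [key b u hu, key b v hv] at this
  exact ⟨by simpa using hstep false, by simpa using hstep true⟩

end StarHelpers
/-- If `m0 ≤ m1 ≤ m2` are `I`-systems, `m0 * m1` and `m1 * m2` are independent,
and `I × 3` is (realized) in `Iis` (as `J` with `φ : J ≅ I × 3`), then
`m0 * m1 * m2` is independent; in particular `m0 * m2` is independent, so
transitivity follows from the other axioms when `Iis` is closed under
products. -/
theorem stmt_11 (S : MultiIndep τ ar α) (I : Idx) (hI : I ∈ S.Iis)
    (m0 m1 m2 : Finset ℕ → Str τ ar α)
    (h01 : ∀ u ∈ I, S.A.le (m0 u) (m1 u))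
    (h12 : ∀ u ∈ I, S.A.le (m1 u) (m2 u))
    (hs01 : StarNF S.NF I m0 m1) (hs12 : StarNF S.NF I m1 m2)
    (J : Idx) (hJ : J ∈ S.Iis)
    (φ : {x : Finset ℕ // x ∈ J} ≃o ({x : Finset ℕ // x ∈ I} × Fin 3)) :
    S.NF J (star3fun I J φ m0 m1 m2) ∧ StarNF S.NF I m0 m2 := by
  have hb01 : (0 : Fin 3) < 1 := by decide
  have hb12 : (1 : Fin 3) < 2 := by decide
  have hb02 : (0 : Fin 3) < 2 := by decide
  have hs01' : StarNF S.NF I (![m0, m1, m2] 0) (![m0, m1, m2] 1) := hs01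
  have hs12' : StarNF S.NF I (![m0, m1, m2] 1) (![m0, m1, m2] 2) := hs12
  have hK0 : ∀ u ∈ I, m0 u ∈ S.A.K := fun u hu => (S.A.le_mem (h01 u hu)).1
  have hK1 : ∀ u ∈ I, m1 u ∈ S.A.K := fun u hu => (S.A.le_mem (h01 u hu)).2
  have hK2 : ∀ u ∈ I, m2 u ∈ S.A.K := fun u hu => (S.A.le_mem (h12 u hu)).2
  have hK : ∀ i : Fin 3, ∀ u ∈ I, ![m0, m1, m2] i u ∈ S.A.K := by
    intro i u hu
    fin_cases i
    exacts [hK0 u hu, hK1 u hu, hK2 u hu]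
  have hmono : ∀ i : Fin 3, ∀ u ∈ I, ∀ v ∈ I, u ⊆ v →
      S.A.le (![m0, m1, m2] i u) (![m0, m1, m2] i v) := by
    intro i u hu v hv huv
    fin_cases i
    · exact (star_mono S hs01' u hu v hv huv).1
    · exact (star_mono S hs01' u hu v hv huv).2
    · exact (star_mono S hs12' u hu v hv huv).2
  have hstep : ∀ i j : Fin 3, i ≤ j → ∀ u ∈ I,
      S.A.le (![m0, m1, m2] i u) (![m0, m1, m2] j u) := by
    intro i j hij u hu
    fin_cases i <;> fin_cases j <;>
      first
        | exact absurd hij (by decide)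
        | exact S.A.le_refl _ (hK0 u hu)
        | exact S.A.le_refl _ (hK1 u hu)
        | exact S.A.le_refl _ (hK2 u hu)
        | exact h01 u hu
        | exact h12 u hu
        | exact S.A.le_trans (h01 u hu) (h12 u hu)
  have hsysJ : IsSystem S.A J (star3fun I J φ m0 m1 m2) := by
    constructor
    · intro u hu
      rw [star3fun, dif_pos hu]
      exact hK _ _ (φ ⟨u, hu⟩).1.prop
    · intro u hu v hv huv
      have hle : φ ⟨u, hu⟩ ≤ φ ⟨v, hv⟩ :=
        φ.monotone (Subtype.mk_le_mk.mpr (Finset.le_iff_subset.mpr huv))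
      obtain ⟨hle1, hle2⟩ := Prod.le_def.mp hle
      simp only [star3fun]
      rw [dif_pos hu, dif_pos hv]
      exact S.A.le_trans
        (hmono _ _ (φ ⟨u, hu⟩).1.prop _ (φ ⟨v, hv⟩).1.prop
          (Finset.le_iff_subset.mp (Subtype.coe_le_coe.mpr hle1)))
        (hstep _ _ hle2 _ (φ ⟨v, hv⟩).1.prop)
  have hmJ : MeetClosed J := S.iis_inf J hJ
  have hJ1 : Jpair I J φ 0 1 ∈ S.Iis := S.iis_init J hJ _ initSeg_Jpair01
  have hJ2 : Jpair I J φ 1 2 ∈ S.Iis := S.iis_iso _ hJ1 _ (meetClosed_Jpair hb12 hmJ)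
    ⟨(ePair 1 2 hb12).trans (ePair 0 1 hb01).symm⟩
  have hJ02 : Jpair I J φ 0 2 ∈ S.Iis := S.iis_iso _ hJ1 _ (meetClosed_Jpair hb02 hmJ)
    ⟨(ePair 0 2 hb02).trans (ePair 0 1 hb01).symm⟩
  have hNF1 : S.NF (Jpair I J φ 0 1) (star3fun I J φ m0 m1 m2) := NF_Jpair S hb01 m0 m1 m2 hs01'
  have hNF2 : S.NF (Jpair I J φ 1 2) (star3fun I J φ m0 m1 m2) := NF_Jpair S hb12 m0 m1 m2 hs12'
  have hCof : ∀ u ∈ Jpair I J φ 0 1, ∃ w, w ∈ Jpair I J φ 0 1 ∧ w ∈ Jpair I J φ 1 2 ∧ u ⊆ w := by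
    intro u hu
    have huJ : u ∈ J := Jpair_subset hu
    have hval : ∀ h, φ ⟨(φ.symm ((φ ⟨u, huJ⟩).1, 1) : Finset ℕ), h⟩ = ((φ ⟨u, huJ⟩).1, 1) :=
      fun h => φ.apply_symm_apply _
    refine ⟨(φ.symm ((φ ⟨u, huJ⟩).1, 1) : Finset ℕ),
      mem_Jpair_of (φ.symm ((φ ⟨u, huJ⟩).1, 1)).prop (by rw [hval]; right; rfl),
      mem_Jpair_of (φ.symm ((φ ⟨u, huJ⟩).1, 1)).prop (by rw [hval]; left; rfl), ?_⟩
    have h2 : (φ ⟨u, huJ⟩).2 ≤ 1 := by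
      rcases Jpair_spec hu huJ with h | h <;> rw [h] <;> decide
    have hle : (⟨u, huJ⟩ : {x : Finset ℕ // x ∈ J}) ≤ φ.symm ((φ ⟨u, huJ⟩).1, 1) := by
      rw [← φ.le_iff_le, OrderIso.apply_symm_apply]
      exact Prod.le_def.mpr ⟨le_refl _, h2⟩
    exact Finset.le_iff_subset.mp (Subtype.coe_le_coe.mpr hle)
  have hUnion : Jpair I J φ 0 1 ∪ Jpair I J φ 1 2 = J := by
    apply Finset.Subset.antisymm
    · intro v hv
      rcases Finset.mem_union.mp hv with h | h
      exacts [Jpair_subset h, Jpair_subset h]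
    · intro v hv
      have h3 : (φ ⟨v, hv⟩).2 = 0 ∨ (φ ⟨v, hv⟩).2 = 1 ∨ (φ ⟨v, hv⟩).2 = 2 := by
        generalize (φ ⟨v, hv⟩).2 = i
        fin_cases i <;> simp
      rcases h3 with h | h | h
      · exact Finset.mem_union_left _ (mem_Jpair_of hv (Or.inl h))
      · exact Finset.mem_union_left _ (mem_Jpair_of hv (Or.inr h))
      · exact Finset.mem_union_right _ (mem_Jpair_of hv (Or.inr h))
  have hNFJ : S.NF J (star3fun I J φ m0 m1 m2) :=
    S.mono4 J hJ _ hJ1 _ hJ2 _ hsysJ initSeg_Jpair01 Jpair_subset hCof hUnion hNF1 hNF2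
  refine ⟨hNFJ, ?_⟩
  have hNF02 : S.NF (Jpair I J φ 0 2) (star3fun I J φ m0 m1 m2) :=
    S.mono1 J _ hNFJ _ hJ02 Jpair_subset
  exact ⟨Jpair I J φ 0 2, ePair 0 2 hb02,
    S.nf_restrict _ _ _ (fun v hv => (star2_eq_star3 hb02 m0 m1 m2 hv).symm) hNF02⟩
end

section
/- Let nf be a two-dimensional independence notion on an abstract class K. Define an I-system ⟨M_u : u ∈ I⟩ (I a finite semilattice) to be independent iff for all u₁, u₂, v ∈ I with u₁ ≤ v and u₂ ≤ v, nf(M_{u₁∧u₂}, M_{u₁}, M_{u₂}, M_v) holds. Then this notion satisfies monotonicity 4: if I₁, I₂ ⊆ I are semilattices with I₁ an initial segment of I, I₁ ∩ I₂ cofinal in I₁, I₁ ∪ I₂ = I, and the restrictions of a system m to I₁ and to I₂ are both independent, then m is independent. -/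
variable {τ : Type} {ar : τ → ℕ} {α : Type}

variable {τ : Type} {ar : τ → ℕ} {α : Type}

/-- A two-dimensional independence relation on an abstract class. -/
structure TwoDim (τ : Type) (ar : τ → ℕ) (α : Type) where
  A : AC τ ar α
  nf : Str τ ar α → Str τ ar α → Str τ ar α → Str τ ar α → Prop
  nf_le : ∀ {M0 M1 M2 M3}, nf M0 M1 M2 M3 →
    A.le M0 M1 ∧ A.le M0 M2 ∧ A.le M1 M3 ∧ A.le M2 M3
  invariance : ∀ M0 M1 M2 M3 M3' f, A.le M0 M1 → A.le M1 M3 → A.le M0 M2 →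
    A.le M2 M3 → KEmb A M3 M3' f →
    (nf M0 M1 M2 M3 ↔ nf (mapStr f M0) (mapStr f M1) (mapStr f M2) M3')
  mono : ∀ {M0 M1 M1' M2 M3}, nf M0 M1 M2 M3 → A.le M0 M1' → A.le M1' M1 →
    nf M0 M1' M2 M3
  disj : ∀ {M0 M1 M2 M3}, nf M0 M1 M2 M3 → M1.carrier ∩ M2.carrier = M0.carrier
  symm : ∀ {M0 M1 M2 M3}, nf M0 M1 M2 M3 → nf M0 M2 M1 M3
  trans : ∀ {M0 M1 M2 M3 M4 M5}, nf M0 M1 M2 M3 → nf M2 M3 M4 M5 → nf M0 M1 M4 M5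
  ext : ∀ M0 M1 M2, A.le M0 M1 → A.le M0 M2 →
    ∃ M3 f1 f2, M3 ∈ A.K ∧ KEmb A M1 M3 f1 ∧ KEmb A M2 M3 f2 ∧
      (∀ x ∈ M0.carrier, f1 x = x ∧ f2 x = x) ∧
      nf M0 (mapStr f1 M1) (mapStr f2 M2) M3
  uniq : ∀ M0 M1 M2 M3 M0' M1' M2' M3' f0 f1 f2,
    nf M0 M1 M2 M3 → nf M0' M1' M2' M3' →
    IsoF M0 M0' f0 → IsoF M1 M1' f1 → IsoF M2 M2' f2 →
    (∀ x ∈ M0.carrier, f1 x = f0 x) → (∀ x ∈ M0.carrier, f2 x = f0 x) →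
    ∃ M3'' f3, A.le M3' M3'' ∧ KEmb A M3 M3'' f3 ∧
      (∀ x ∈ M1.carrier, f3 x = f1 x) ∧ (∀ x ∈ M2.carrier, f3 x = f2 x)

/-- An `I`-system is independent (in the relation induced by `nf`) iff for all
`u₁, u₂ ≤ v` in `I`, `nf(M_{u₁ ∩ u₂}, M_{u₁}, M_{u₂}, M_v)`. -/
def NFsys (T : TwoDim τ ar α) (I : Idx) (m : Finset ℕ → Str τ ar α) : Prop :=
  ∀ u1 ∈ I, ∀ u2 ∈ I, ∀ v ∈ I, u1 ⊆ v → u2 ⊆ v →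
    T.nf (m (u1 ∩ u2)) (m u1) (m u2) (m v)

/-- Monotonicity 4 for the multidimensional independence notion induced by a
two-dimensional independence relation: if `I₁` is an initial segment of `I`,
`I₁ ∩ I₂` is cofinal in `I₁`, `I₁ ∪ I₂ = I`, and `m` restricted to `I₁` and to
`I₂` is independent, then `m` is independent. -/
theorem stmt_12 (T : TwoDim τ ar α) (I I1 I2 : Idx)
    (hI : MeetClosed I) (hI1 : MeetClosed I1) (hI2 : MeetClosed I2)
    (hinit : InitSeg I1 I) (hsub2 : I2 ⊆ I)
    (hcof : ∀ u ∈ I1, ∃ w, w ∈ I1 ∧ w ∈ I2 ∧ u ⊆ w)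
    (hunion : I1 ∪ I2 = I)
    (m : Finset ℕ → Str τ ar α) (hm : IsSystem T.A I m)
    (h1 : NFsys T I1 m) (h2 : NFsys T I2 m) :
    NFsys T I m := by
  -- Key: for `u ∈ I1` below `v ∈ I2`, find `u' ∈ I1 ∩ I2` with `u ⊆ u' ⊆ v`.
  have key : ∀ u ∈ I1, ∀ v ∈ I2, u ⊆ v →
      ∃ u', u' ∈ I1 ∧ u' ∈ I2 ∧ u ⊆ u' ∧ u' ⊆ v := by
    intro u hu v hv huv
    obtain ⟨w, hw1, hw2, huw⟩ := hcof u hu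
    set S : Finset (Finset ℕ) := (I1 ∩ I2).filter (fun x => u ⊆ x) with hS
    have hSmem : ∀ x, x ∈ S ↔ (x ∈ I1 ∧ x ∈ I2 ∧ u ⊆ x) := by
      intro x
      simp [hS, Finset.mem_filter, Finset.mem_inter, and_assoc]
    have hne : S.Nonempty := ⟨w, (hSmem w).2 ⟨hw1, hw2, huw⟩⟩
    set u' : Finset ℕ := S.inf' hne id with hu'
    have hmem : u' ∈ ({x | x ∈ I1 ∧ x ∈ I2 ∧ u ⊆ x} : Set (Finset ℕ)) := by
      apply Finset.inf'_mem
      · intro x hx y hy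
        obtain ⟨hx1, hx2, hx3⟩ := hx
        obtain ⟨hy1, hy2, hy3⟩ := hy
        refine ⟨hI1 x hx1 y hy1, hI2 x hx2 y hy2, Finset.subset_inter hx3 hy3⟩
      · intro i hi
        exact (hSmem i).1 hi
    obtain ⟨hu'1, hu'2, huu'⟩ := hmem
    refine ⟨u', hu'1, hu'2, huu', ?_⟩
    -- u' ∩ v ∈ S, hence u' ⊆ u' ∩ v ⊆ v
    have hivI : u' ∩ v ∈ I := hI u' (hsub2 hu'2) v (hsub2 hv)
    have hiv1 : u' ∩ v ∈ I1 := hinit.2 u' hu'1 (u' ∩ v) hivI Finset.inter_subset_left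
    have hiv2 : u' ∩ v ∈ I2 := hI2 u' hu'2 v hv
    have hivS : u' ∩ v ∈ S := (hSmem _).2 ⟨hiv1, hiv2, Finset.subset_inter huu' huv⟩
    have hle : u' ⊆ u' ∩ v := Finset.inf'_le id hivS
    exact hle.trans Finset.inter_subset_right
  -- Lemma L: nf holds whenever the second coordinate and top are in I2.
  have L : ∀ u ∈ I, ∀ w ∈ I2, ∀ v ∈ I2, u ⊆ v → w ⊆ v →
      T.nf (m (u ∩ w)) (m u) (m w) (m v) := by
    intro u huI w hwI2 v hvI2 huv hwv
    by_cases hu2 : u ∈ I2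
    · exact h2 u hu2 w hwI2 v hvI2 huv hwv
    · have hu1 : u ∈ I1 := by
        have := huI
        rw [← hunion, Finset.mem_union] at this
        tauto
      obtain ⟨u', hu'1, hu'2, huu', hu'v⟩ := key u hu1 v hvI2 huv
      have A : T.nf (m (u' ∩ w)) (m u') (m w) (m v) :=
        h2 u' hu'2 w hwI2 v hvI2 hu'v hwv
      have huwI : u' ∩ w ∈ I := hI u' (hsub2 hu'2) w (hsub2 hwI2)
      have huw1 : u' ∩ w ∈ I1 := hinit.2 u' hu'1 (u' ∩ w) huwI Finset.inter_subset_left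
      have B : T.nf (m (u ∩ (u' ∩ w))) (m u) (m (u' ∩ w)) (m u') :=
        h1 u hu1 (u' ∩ w) huw1 u' hu'1 huu' Finset.inter_subset_left
      have heq : u ∩ (u' ∩ w) = u ∩ w := by
        rw [← Finset.inter_assoc, Finset.inter_eq_left.2 huu']
      rw [heq] at B
      exact T.trans B A
  intro u1 hu1I u2 hu2I v hvI h1v h2v
  have hv12 : v ∈ I1 ∨ v ∈ I2 := by
    rw [← hunion, Finset.mem_union] at hvI; exact hvI
  rcases hv12 with hv1 | hv2
  · -- everything is in I1
    exact h1 u1 (hinit.2 v hv1 u1 hu1I h1v) u2 (hinit.2 v hv1 u2 hu2I h2v) v hv1 h1v h2v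
  · by_cases h22 : u2 ∈ I2
    · exact L u1 hu1I u2 h22 v hv2 h1v h2v
    · have hu21 : u2 ∈ I1 := by
        have := hu2I
        rw [← hunion, Finset.mem_union] at this
        tauto
      obtain ⟨u2', hu2'1, hu2'2, hu2u2', hu2'v⟩ := key u2 hu21 v hv2 h2v
      have A : T.nf (m (u1 ∩ u2')) (m u1) (m u2') (m v) :=
        L u1 hu1I u2' hu2'2 v hv2 h1v hu2'v
      have A' := T.symm A
      have hiI : u2' ∩ u1 ∈ I := hI u2' (hsub2 hu2'2) u1 hu1I
      have hi1 : u2' ∩ u1 ∈ I1 := hinit.2 u2' hu2'1 (u2' ∩ u1) hiI Finset.inter_subset_left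
      have B : T.nf (m (u2 ∩ (u2' ∩ u1))) (m u2) (m (u2' ∩ u1)) (m u2') :=
        h1 u2 hu21 (u2' ∩ u1) hi1 u2' hu2'1 hu2u2' Finset.inter_subset_left
      have heq : u2 ∩ (u2' ∩ u1) = u2 ∩ u1 := by
        rw [← Finset.inter_assoc, Finset.inter_eq_left.2 hu2u2']
      rw [heq, Finset.inter_comm u2' u1] at B
      have C := T.trans B A'
      have D := T.symm C
      rwa [Finset.inter_comm u2 u1] at D
end
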